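/- With P_n(x) = det(M_n(x)) as above, for all n > 1: P_{2n}(x) − x^{2n} = P_{n−1}(x)·(P_{n+1}(x) − x²·P_{n−1}(x)). -/

import Mathlib

/-
Expanding along the first row gives the recurrence `P (n + 2) = P (n + 1) - x² P n` with
`P 0 = P 1 = 1`. Such a sequence obeys an addition formula, which for `n = k + 1` gives
`P (2n) = P n² - x² P (n - 1)²`, and Cassini's identity `P n² - P (n + 1) P (n - 1) = x^(2n)`;
substituting the second into the first yields the claim.
-/

open Matrix Polynomial

noncomputable def Mmat (n : ℕ) (x : ℂ) : Matrix (Fin n) (Fin n) ℂ :=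
  Matrix.of fun i j =>
    if (i : ℕ) = (j : ℕ) then 1
    else if (i : ℕ) + 1 = (j : ℕ) ∨ (j : ℕ) + 1 = (i : ℕ) then x else 0

noncomputable def P (n : ℕ) (x : ℂ) : ℂ := (Mmat n x).det

section LinearRecurrence

variable {R : Type*} [CommRing R] {a c : R} {u : ℕ → R}

theorem cassini_of_recurrence (hu : ∀ k, u (k + 2) = a * u (k + 1) - c * u k) (k : ℕ) :
    u (k + 1) ^ 2 - u (k + 2) * u k = c ^ k * (u 1 ^ 2 - u 2 * u 0) := by
  induction k with
  | zero => simp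
  | succ k ih =>
    linear_combination c * ih - u (k + 1) * hu (k + 1) + u (k + 2) * hu k

theorem add_two_of_recurrence (hu : ∀ k, u (k + 2) = a * u (k + 1) - c * u k)
    (h0 : u 0 = 1) (h1 : u 1 = a) (m k : ℕ) :
    u (m + k + 2) = u (m + 1) * u (k + 1) - c * u m * u k := by
  induction k using Nat.twoStepInduction with
  | zero => rw [h0, h1, hu]; ring
  | one => rw [hu, hu, hu 0, h0, h1]; ring
  | more k ih₀ ih₁ =>
    have h := hu (m + k + 2)
    rw [show m + k + 2 + 2 = m + (k + 2) + 2 by omega,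
      show m + k + 2 + 1 = m + (k + 1) + 2 by omega] at h
    linear_combination h + a * ih₁ - c * ih₀ - u (m + 1) * hu (k + 1) + c * u m * hu k

end LinearRecurrence

@[simp]
lemma Mmat_apply (n : ℕ) (x : ℂ) (i j : Fin n) :
    Mmat n x i j = if (i : ℕ) = (j : ℕ) then 1
      else if (i : ℕ) + 1 = (j : ℕ) ∨ (j : ℕ) + 1 = (i : ℕ) then x else 0 := rfl

lemma Mmat_submatrix_succ_succ (n : ℕ) (x : ℂ) :
    (Mmat (n + 1) x).submatrix Fin.succ Fin.succ = Mmat n x := by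
  ext i j
  simp

lemma P_zero (x : ℂ) : P 0 x = 1 := det_fin_zero

lemma P_one (x : ℂ) : P 1 x = 1 := by simp [P]

lemma P_add_two (n : ℕ) (x : ℂ) : P (n + 2) x = P (n + 1) x - x ^ 2 * P n x := by
  -- the only nonzero entry in the first column of this minor is the `x` in its top-left corner
  have hminor : ((Mmat (n + 2) x).submatrix Fin.succ (Fin.succAbove 1)).det = x * P n x := by
    have hsub : ((Mmat (n + 2) x).submatrix Fin.succ (Fin.succAbove 1)).submatrix
        (Fin.succAbove 0) Fin.succ = Mmat n x := by
      rw [← Mmat_submatrix_succ_succ n x, ← Mmat_submatrix_succ_succ (n + 1) x]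
      ext i j
      simp [Fin.succAbove]
    rw [det_succ_column_zero, Fin.sum_univ_succ, Finset.sum_eq_zero, hsub]
    · simp [P]
    · intro i _
      simp
  have h00 : Mmat (n + 2) x 0 0 = 1 := by simp
  have h01 : Mmat (n + 2) x 0 1 = x := by simp
  rw [P, det_succ_row_zero, Fin.sum_univ_succ, Fin.sum_univ_succ, Finset.sum_eq_zero,
    Fin.succAbove_zero, Fin.succ_zero_eq_one, Mmat_submatrix_succ_succ, hminor, h00, h01,
    Fin.val_zero, Fin.val_one, P, P]
  · ring
  · intro j _
    simp

theorem P_even_minus_power (n : ℕ) (hn : 1 < n) (x : ℂ) :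
    P (2 * n) x - x ^ (2 * n) = P (n - 1) x * (P (n + 1) x - x ^ 2 * P (n - 1) x) := by
  obtain ⟨k, rfl⟩ : ∃ k, n = k + 1 := ⟨n - 1, by omega⟩
  have hu (j : ℕ) : P (j + 2) x = 1 * P (j + 1) x - x ^ 2 * P j x := by rw [P_add_two, one_mul]
  have hdouble := add_two_of_recurrence (u := (P · x)) hu (P_zero x) (P_one x) k k
  have hcassini := cassini_of_recurrence (u := (P · x)) hu k
  simp only [P_add_two 0 x, zero_add, P_zero, P_one] at hdouble hcassini
  rw [show 2 * (k + 1) = k + k + 2 by ring, Nat.add_sub_cancel, hdouble]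
  linear_combination hcassini
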